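/- Let d ≥ 2, ν > 0, T > 0, and let u : [0,T] × ℝ^d → ℝ^d and 𝔭 : [0,T] × ℝ^d → ℝ be smooth with div u(t,·) = 0, satisfying the Navier–Stokes equations ∂_t u + (u·∇)u = νΔu − ∇𝔭 pointwise. Let φ : [0,T] × ℝ^d → ℝ^d be smooth with ∂_t φ(t,x) = u(t, φ(t,x)) and φ(0,x) = x. Then for all 1 ≤ α, β ≤ d, t ∈ [0,T], and x ∈ ℝ^d: Σ_{k,l=1}^d ω_{kl}(t, φ(t,x)) ∂_α φ_k(t,x) ∂_β φ_l(t,x) − ω_{αβ}(0,x) = ν ∫_0^t Σ_{k,l=1}^d (Δω_{kl})(s, φ(s,x)) ∂_α φ_k(s,x) ∂_β φ_l(s,x) ds, where ω_{kl} := ∂_k u_l − ∂_l u_k; that is, φ(t)^*ω(t) − ω(0) = ν ∫_0^t φ(s)^*(Δω(s)) ds. -/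

import Mathlib

open MeasureTheory

/-- Partial derivative in direction `j`. -/
noncomputable def pd {d : ℕ} (j : Fin d) (f : (Fin d → ℝ) → ℝ) : (Fin d → ℝ) → ℝ :=
  fun x => fderiv ℝ f x (Pi.single j 1)

/-- Vorticity components `ω_{kl} = ∂_k u_l − ∂_l u_k` of a time-dependent vector field. -/
noncomputable def vort {d : ℕ} (u : ℝ → (Fin d → ℝ) → Fin d → ℝ) (k l : Fin d) (t : ℝ) :
    (Fin d → ℝ) → ℝ :=
  fun x => pd k (fun y => u t y l) x - pd l (fun y => u t y k) x

variable {d : ℕ}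

noncomputable def Dv {d : ℕ} (v : ℝ × (Fin d → ℝ)) (F : ℝ × (Fin d → ℝ) → ℝ) :
    (ℝ × (Fin d → ℝ)) → ℝ := fun z => fderiv ℝ F z v

lemma contDiff_Dv {F : ℝ × (Fin d → ℝ) → ℝ} (hF : ContDiff ℝ (⊤ : ℕ∞) F) (v : ℝ × (Fin d → ℝ)) :
    ContDiff ℝ (⊤ : ℕ∞) (Dv v F) := by
  have h1 : ContDiff ℝ (⊤ : ℕ∞) (fderiv ℝ F) := hF.fderiv_right (by simp)
  exact h1.clm_apply contDiff_const

lemma hasFDerivAt_Dv {F : ℝ × (Fin d → ℝ) → ℝ} (hF : ContDiff ℝ (⊤ : ℕ∞) F) (v : ℝ × (Fin d → ℝ))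
    (z : ℝ × (Fin d → ℝ)) :
    HasFDerivAt (Dv v F) (((fderiv ℝ (fderiv ℝ F) z).flip) v) z := by
  have h1 : ContDiff ℝ (⊤ : ℕ∞) (fderiv ℝ F) := hF.fderiv_right (by simp)
  have h2 : HasFDerivAt (fderiv ℝ F) (fderiv ℝ (fderiv ℝ F) z) z :=
    (h1.differentiable (by simp) z).hasFDerivAt
  have h3 := h2.clm_apply (hasFDerivAt_const v z)
  simp at h3
  exact h3

lemma Dv_comm {F : ℝ × (Fin d → ℝ) → ℝ} (hF : ContDiff ℝ (⊤ : ℕ∞) F) (v w z : ℝ × (Fin d → ℝ)) :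
    Dv v (Dv w F) z = Dv w (Dv v F) z := by
  have hsymm : ∀ a b, fderiv ℝ (fderiv ℝ F) z a b = fderiv ℝ (fderiv ℝ F) z b a := by
    intro a b
    exact second_derivative_symmetric (fun y => (hF.differentiable (by simp) y).hasFDerivAt)
      ((((hF.fderiv_right (m := (⊤ : ℕ∞)) (by simp)).differentiable (by simp)) z).hasFDerivAt) a b
  have h1 : Dv v (Dv w F) z = fderiv ℝ (fderiv ℝ F) z v w := by
    have := (hasFDerivAt_Dv hF w z).fderiv
    simp only [Dv, this]
    rfl
  have h2 : Dv w (Dv v F) z = fderiv ℝ (fderiv ℝ F) z w v := by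
    have := (hasFDerivAt_Dv hF v z).fderiv
    simp only [Dv, this]
    rfl
  rw [h1, h2, hsymm]

-- x-slice
lemma hasFDerivAt_sliceX {F : ℝ × (Fin d → ℝ) → ℝ} (hF : ContDiff ℝ (⊤ : ℕ∞) F) (t : ℝ)
    (x : Fin d → ℝ) :
    HasFDerivAt (fun y => F (t, y))
      ((fderiv ℝ F (t, x)).comp ((0 : (Fin d → ℝ) →L[ℝ] ℝ).prod (ContinuousLinearMap.id ℝ _))) x := by
  have h1 : HasFDerivAt (fun y : Fin d → ℝ => ((t : ℝ), y))
      ((0 : (Fin d → ℝ) →L[ℝ] ℝ).prod (ContinuousLinearMap.id ℝ _)) x :=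
    (hasFDerivAt_const t x).prodMk (hasFDerivAt_id x)
  exact ((hF.differentiable (by simp) _).hasFDerivAt).comp x h1

lemma pd_slice {F : ℝ × (Fin d → ℝ) → ℝ} (hF : ContDiff ℝ (⊤ : ℕ∞) F) (t : ℝ) (x : Fin d → ℝ)
    (j : Fin d) : pd j (fun y => F (t, y)) x = Dv (0, Pi.single j 1) F (t, x) := by
  have := (hasFDerivAt_sliceX hF t x).fderiv
  simp only [pd, this, Dv]
  rfl

-- t-slice
lemma hasDerivAt_sliceT {F : ℝ × (Fin d → ℝ) → ℝ} (hF : ContDiff ℝ (⊤ : ℕ∞) F) (t : ℝ)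
    (x : Fin d → ℝ) :
    HasDerivAt (fun s => F (s, x)) (Dv (1, 0) F (t, x)) t := by
  have h1 : HasDerivAt (fun s : ℝ => (s, x)) ((1 : ℝ), (0 : Fin d → ℝ)) t :=
    (hasDerivAt_id t).prodMk (hasDerivAt_const t x)
  exact ((hF.differentiable (by simp) _).hasFDerivAt).comp_hasDerivAt t h1

-- decomposition of applying a CLM to (0, w)
lemma clm_apply_zero_w (L : (ℝ × (Fin d → ℝ)) →L[ℝ] ℝ) (w : Fin d → ℝ) :
    L ((0 : ℝ), w) = ∑ k : Fin d, w k * L (0, Pi.single k 1) := by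
  have hw : ((0:ℝ), w) = ∑ k : Fin d, (w k) • (((0:ℝ), Pi.single k 1) : ℝ × (Fin d → ℝ)) := by
    ext
    · simp [Prod.fst_sum]
    · simp only [Prod.snd_sum, Prod.smul_snd]
      rw [Finset.sum_apply]
      simp [Pi.single_apply]
  rw [hw, map_sum]
  congr 1
  ext k
  rw [_root_.map_smul]
  simp [smul_eq_mul]

lemma clm_apply_one_w (L : (ℝ × (Fin d → ℝ)) →L[ℝ] ℝ) (w : Fin d → ℝ) :
    L ((1 : ℝ), w) = L (1, 0) + ∑ k : Fin d, w k * L (0, Pi.single k 1) := by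
  have : ((1:ℝ), w) = ((1:ℝ), (0 : Fin d → ℝ)) + ((0:ℝ), w) := by simp
  rw [this, map_add, clm_apply_zero_w]

lemma differentiable_sliceX {F : ℝ × (Fin d → ℝ) → ℝ} (hF : ContDiff ℝ (⊤ : ℕ∞) F) (t : ℝ) :
    Differentiable ℝ (fun y => F (t, y)) :=
  fun x => (hasFDerivAt_sliceX hF t x).differentiableAt

lemma contDiff_sliceX {F : ℝ × (Fin d → ℝ) → ℝ} (hF : ContDiff ℝ (⊤ : ℕ∞) F) (t : ℝ) :
    ContDiff ℝ (⊤ : ℕ∞) (fun y => F (t, y)) :=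
  hF.comp (contDiff_const.prodMk contDiff_id)

-- chain rule along a curve
lemma hasDerivAt_comp_curve {F : ℝ × (Fin d → ℝ) → ℝ} (hF : ContDiff ℝ (⊤ : ℕ∞) F)
    {c : ℝ → Fin d → ℝ} {c' : Fin d → ℝ} {s : ℝ} (hc : HasDerivAt c c' s) :
    HasDerivAt (fun r => F (r, c r))
      (Dv (1, 0) F (s, c s) + ∑ k : Fin d, c' k * Dv (0, Pi.single k 1) F (s, c s)) s := by
  have h1 : HasDerivAt (fun r : ℝ => (r, c r)) ((1 : ℝ), c') s := (hasDerivAt_id s).prodMk hc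
  have h2 := ((hF.differentiable (by simp) _).hasFDerivAt).comp_hasDerivAt s h1
  have h3 : fderiv ℝ F (s, c s) (1, c') =
      Dv (1, 0) F (s, c s) + ∑ k : Fin d, c' k * Dv (0, Pi.single k 1) F (s, c s) := by
    rw [clm_apply_one_w]; rfl
  rw [← h3]; exact h2

-- chain rule in space: pd of F(t, g y)
lemma pd_comp {F : ℝ × (Fin d → ℝ) → ℝ} (hF : ContDiff ℝ (⊤ : ℕ∞) F) {g : (Fin d → ℝ) → Fin d → ℝ}
    (hg : ∀ k x, DifferentiableAt ℝ (fun y => g y k) x) (t : ℝ) (x : Fin d → ℝ) (α : Fin d) :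
    pd α (fun y => F (t, g y)) x =
      ∑ k : Fin d, pd α (fun y => g y k) x * Dv (0, Pi.single k 1) F (t, g x) := by
  have hgd : DifferentiableAt ℝ g x := by
    rw [differentiableAt_pi]; exact fun k => hg k x
  have h1 : HasFDerivAt (fun y : Fin d → ℝ => ((t : ℝ), g y))
      ((0 : (Fin d → ℝ) →L[ℝ] ℝ).prod (fderiv ℝ g x)) x :=
    (hasFDerivAt_const t x).prodMk hgd.hasFDerivAt
  have h2 := ((hF.differentiable (by simp) _).hasFDerivAt).comp x h1
  have h3 := h2.fderiv
  simp only [pd]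
  rw [show (fun y => F (t, g y)) = F ∘ (fun y => (t, g y)) from rfl, h3]
  simp only [ContinuousLinearMap.coe_comp', Function.comp_apply]
  have h4 : (fderiv ℝ g x) (Pi.single α 1) = fun k => pd α (fun y => g y k) x := by
    rw [fderiv_pi (fun k => hg k x)]
    rfl
  rw [show ((0 : (Fin d → ℝ) →L[ℝ] ℝ).prod (fderiv ℝ g x)) (Pi.single α 1)
      = ((0:ℝ), (fderiv ℝ g x) (Pi.single α 1)) from rfl, h4, clm_apply_zero_w]
  rfl

lemma pd_add {f g : (Fin d → ℝ) → ℝ} {x : Fin d → ℝ} (hf : DifferentiableAt ℝ f x)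
    (hg : DifferentiableAt ℝ g x) (j : Fin d) :
    pd j (fun y => f y + g y) x = pd j f x + pd j g x := by
  simp only [pd]; rw [fderiv_fun_add hf hg]; rfl

lemma pd_sub {f g : (Fin d → ℝ) → ℝ} {x : Fin d → ℝ} (hf : DifferentiableAt ℝ f x)
    (hg : DifferentiableAt ℝ g x) (j : Fin d) :
    pd j (fun y => f y - g y) x = pd j f x - pd j g x := by
  simp only [pd]; rw [fderiv_fun_sub hf hg]; rfl

lemma pd_mul {f g : (Fin d → ℝ) → ℝ} {x : Fin d → ℝ} (hf : DifferentiableAt ℝ f x)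
    (hg : DifferentiableAt ℝ g x) (j : Fin d) :
    pd j (fun y => f y * g y) x = pd j f x * g x + f x * pd j g x := by
  simp only [pd]; rw [fderiv_fun_mul hf hg]
  simp only [ContinuousLinearMap.add_apply, ContinuousLinearMap.smul_apply, smul_eq_mul]
  ring

lemma pd_const_mul {f : (Fin d → ℝ) → ℝ} {x : Fin d → ℝ} (hf : DifferentiableAt ℝ f x)
    (c : ℝ) (j : Fin d) :
    pd j (fun y => c * f y) x = c * pd j f x := by
  simp only [pd]; rw [fderiv_const_mul hf]; rfl

lemma pd_sum {ι : Type*} (s : Finset ι) {f : ι → (Fin d → ℝ) → ℝ} {x : Fin d → ℝ}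
    (hf : ∀ i ∈ s, DifferentiableAt ℝ (f i) x) (j : Fin d) :
    pd j (fun y => ∑ i ∈ s, f i y) x = ∑ i ∈ s, pd j (f i) x := by
  simp only [pd]; rw [fderiv_fun_sum hf]
  simp

lemma Dv_sub' {F G : ℝ × (Fin d → ℝ) → ℝ} {z : ℝ × (Fin d → ℝ)}
    (hF : DifferentiableAt ℝ F z) (hG : DifferentiableAt ℝ G z) (v : ℝ × (Fin d → ℝ)) :
    Dv v (fun w => F w - G w) z = Dv v F z - Dv v G z := by
  simp only [Dv]; rw [fderiv_fun_sub hF hG]; rfl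

/-- time direction vector -/
noncomputable def et (d : ℕ) : ℝ × (Fin d → ℝ) := (1, 0)
/-- space direction vector -/
noncomputable def ex (j : Fin d) : ℝ × (Fin d → ℝ) := (0, Pi.single j 1)

noncomputable def UU {d : ℕ} (u : ℝ → (Fin d → ℝ) → Fin d → ℝ) (q : Fin d) :
    ℝ × (Fin d → ℝ) → ℝ := fun z => u z.1 z.2 q

noncomputable def Om {d : ℕ} (u : ℝ → (Fin d → ℝ) → Fin d → ℝ) (k l : Fin d) :
    ℝ × (Fin d → ℝ) → ℝ :=
  fun z => Dv (ex k) (UU u l) z - Dv (ex l) (UU u k) z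

section NS

variable {u : ℝ → (Fin d → ℝ) → Fin d → ℝ} (hu : ∀ q : Fin d, ContDiff ℝ (⊤ : ℕ∞) (UU u q))
include hu

lemma contDiff_Om (k l : Fin d) : ContDiff ℝ (⊤ : ℕ∞) (Om u k l) :=
  (contDiff_Dv (hu l) (ex k)).sub (contDiff_Dv (hu k) (ex l))

lemma vort_eq (k l : Fin d) (t : ℝ) (y : Fin d → ℝ) :
    vort u k l t y = Om u k l (t, y) := by
  have h1 : pd k (fun y => u t y l) y = Dv (ex k) (UU u l) (t, y) := pd_slice (hu l) t y k
  have h2 : pd l (fun y => u t y k) y = Dv (ex l) (UU u k) (t, y) := pd_slice (hu k) t y l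
  simp only [vort, Om, h1, h2]

lemma vort_fun_eq (k l : Fin d) (t : ℝ) :
    vort u k l t = fun y => Om u k l (t, y) := funext (vort_eq hu k l t)

lemma pd_pd_eq (q j : Fin d) (t : ℝ) (x : Fin d → ℝ) :
    pd j (pd j (fun y => u t y q)) x = Dv (ex j) (Dv (ex j) (UU u q)) (t, x) := by
  have h1 : pd j (fun y => u t y q) = fun y => Dv (ex j) (UU u q) (t, y) :=
    funext (fun y => pd_slice (hu q) t y j)
  rw [h1]
  exact pd_slice (contDiff_Dv (hu q) (ex j)) t x j

lemma lap_vort_eq (k l j : Fin d) (t : ℝ) (x : Fin d → ℝ) :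
    pd j (pd j (vort u k l t)) x = Dv (ex j) (Dv (ex j) (Om u k l)) (t, x) := by
  rw [vort_fun_eq hu k l t]
  have h1 : pd j (fun y => Om u k l (t, y)) = fun y => Dv (ex j) (Om u k l) (t, y) :=
    funext (fun y => pd_slice (contDiff_Om hu k l) t y j)
  rw [h1]
  exact pd_slice (contDiff_Dv (contDiff_Om hu k l) (ex j)) t x j

variable {P : ℝ → (Fin d → ℝ) → ℝ} {ν T : ℝ}

lemma NS_Dv (hP : ContDiff ℝ (⊤ : ℕ∞) (fun z : ℝ × (Fin d → ℝ) => P z.1 z.2))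
    (hNS : ∀ t ∈ Set.Icc (0 : ℝ) T, ∀ x, ∀ q : Fin d,
      deriv (fun s => u s x q) t + ∑ j : Fin d, u t x j * pd j (fun y => u t y q) x =
        ν * (∑ j : Fin d, pd j (pd j (fun y => u t y q)) x) - pd q (P t) x)
    {t : ℝ} (ht : t ∈ Set.Icc (0 : ℝ) T) (x : Fin d → ℝ) (q : Fin d) :
    Dv (et d) (UU u q) (t, x) + ∑ j : Fin d, u t x j * Dv (ex j) (UU u q) (t, x) =
      ν * (∑ j : Fin d, Dv (ex j) (Dv (ex j) (UU u q)) (t, x)) -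
        Dv (ex q) (fun z : ℝ × (Fin d → ℝ) => P z.1 z.2) (t, x) := by
  have h := hNS t ht x q
  have h1 : deriv (fun s => u s x q) t = Dv (et d) (UU u q) (t, x) :=
    (hasDerivAt_sliceT (hu q) t x).deriv
  have h2 : ∀ j : Fin d, pd j (fun y => u t y q) x = Dv (ex j) (UU u q) (t, x) :=
    fun j => pd_slice (hu q) t x j
  have h3 : ∀ j : Fin d, pd j (pd j (fun y => u t y q)) x
      = Dv (ex j) (Dv (ex j) (UU u q)) (t, x) := fun j => pd_pd_eq hu q j t x
  have h4 : pd q (P t) x = Dv (ex q) (fun z : ℝ × (Fin d → ℝ) => P z.1 z.2) (t, x) :=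
    pd_slice hP t x q
  rw [h1, h4] at h
  simp only [h2, h3] at h
  exact h

lemma NS_Dv_pd (hP : ContDiff ℝ (⊤ : ℕ∞) (fun z : ℝ × (Fin d → ℝ) => P z.1 z.2))
    (hNS : ∀ t ∈ Set.Icc (0 : ℝ) T, ∀ x, ∀ q : Fin d,
      deriv (fun s => u s x q) t + ∑ j : Fin d, u t x j * pd j (fun y => u t y q) x =
        ν * (∑ j : Fin d, pd j (pd j (fun y => u t y q)) x) - pd q (P t) x)
    {t : ℝ} (ht : t ∈ Set.Icc (0 : ℝ) T) (y : Fin d → ℝ) (m q : Fin d) :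
    Dv (et d) (Dv (ex m) (UU u q)) (t, y)
      + ∑ j : Fin d, (Dv (ex m) (UU u j) (t, y) * Dv (ex j) (UU u q) (t, y)
          + u t y j * Dv (ex j) (Dv (ex m) (UU u q)) (t, y)) =
    ν * (∑ j : Fin d, Dv (ex j) (Dv (ex j) (Dv (ex m) (UU u q))) (t, y))
      - Dv (ex m) (Dv (ex q) (fun z : ℝ × (Fin d → ℝ) => P z.1 z.2)) (t, y) := by
  set PP : ℝ × (Fin d → ℝ) → ℝ := fun z => P z.1 z.2 with hPP
  have hfun : (fun y => Dv (et d) (UU u q) (t, y)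
        + ∑ j : Fin d, u t y j * Dv (ex j) (UU u q) (t, y))
      = (fun y => ν * (∑ j : Fin d, Dv (ex j) (Dv (ex j) (UU u q)) (t, y))
        - Dv (ex q) PP (t, y)) :=
    funext (fun y => NS_Dv hu hP hNS ht y q)
  have hpd := congrFun (congrArg (pd m) hfun) y
  -- differentiability of slices
  have dslice : ∀ (F : ℝ × (Fin d → ℝ) → ℝ), ContDiff ℝ (⊤ : ℕ∞) F →
      ∀ w, DifferentiableAt ℝ (fun y => F (t, y)) w :=
    fun F hF w => (differentiable_sliceX hF t) w
  have dA : ∀ w, DifferentiableAt ℝ (fun y => Dv (et d) (UU u q) (t, y)) w :=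
    dslice _ (contDiff_Dv (hu q) (et d))
  have dUj : ∀ (j : Fin d) w, DifferentiableAt ℝ (fun y => u t y j) w :=
    fun j w => dslice _ (hu j) w
  have dDxU : ∀ (v : ℝ × (Fin d → ℝ)) (j : Fin d) w,
      DifferentiableAt ℝ (fun y => Dv v (UU u j) (t, y)) w :=
    fun v j w => dslice _ (contDiff_Dv (hu j) v) w
  have dB : ∀ w, DifferentiableAt ℝ
      (fun y => ∑ j : Fin d, u t y j * Dv (ex j) (UU u q) (t, y)) w := by
    intro w
    exact DifferentiableAt.fun_sum (fun j _ => (dUj j w).fun_mul (dDxU (ex j) q w))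
  have dS : ∀ w, DifferentiableAt ℝ
      (fun y => ∑ j : Fin d, Dv (ex j) (Dv (ex j) (UU u q)) (t, y)) w := by
    intro w
    exact DifferentiableAt.fun_sum
      (fun j _ => dslice _ (contDiff_Dv (contDiff_Dv (hu q) (ex j)) (ex j)) w)
  have dC : ∀ w, DifferentiableAt ℝ (fun y => Dv (ex q) PP (t, y)) w :=
    dslice _ (contDiff_Dv hP (ex q))
  -- expand the left side
  have hL : pd m (fun y => Dv (et d) (UU u q) (t, y)
        + ∑ j : Fin d, u t y j * Dv (ex j) (UU u q) (t, y)) y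
      = Dv (et d) (Dv (ex m) (UU u q)) (t, y)
        + ∑ j : Fin d, (Dv (ex m) (UU u j) (t, y) * Dv (ex j) (UU u q) (t, y)
            + u t y j * Dv (ex j) (Dv (ex m) (UU u q)) (t, y)) := by
    rw [pd_add (dA y) (dB y) m]
    have e1 : pd m (fun y => Dv (et d) (UU u q) (t, y)) y
        = Dv (et d) (Dv (ex m) (UU u q)) (t, y) := by
      rw [pd_slice (contDiff_Dv (hu q) (et d)) t y m]
      exact Dv_comm (hu q) (ex m) (et d) (t, y)
    have e2 : pd m (fun y => ∑ j : Fin d, u t y j * Dv (ex j) (UU u q) (t, y)) y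
        = ∑ j : Fin d, (Dv (ex m) (UU u j) (t, y) * Dv (ex j) (UU u q) (t, y)
            + u t y j * Dv (ex j) (Dv (ex m) (UU u q)) (t, y)) := by
      rw [pd_sum Finset.univ (fun j _ => (dUj j y).fun_mul (dDxU (ex j) q y)) m]
      refine Finset.sum_congr rfl (fun j _ => ?_)
      rw [pd_mul (dUj j y) (dDxU (ex j) q y) m]
      have e3 : pd m (fun y => u t y j) y = Dv (ex m) (UU u j) (t, y) :=
        pd_slice (hu j) t y m
      have e4 : pd m (fun y => Dv (ex j) (UU u q) (t, y)) y
          = Dv (ex j) (Dv (ex m) (UU u q)) (t, y) := by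
        rw [pd_slice (contDiff_Dv (hu q) (ex j)) t y m]
        exact Dv_comm (hu q) (ex m) (ex j) (t, y)
      rw [e3, e4]
    rw [e1, e2]
  -- expand the right side
  have hR : pd m (fun y => ν * (∑ j : Fin d, Dv (ex j) (Dv (ex j) (UU u q)) (t, y))
        - Dv (ex q) PP (t, y)) y
      = ν * (∑ j : Fin d, Dv (ex j) (Dv (ex j) (Dv (ex m) (UU u q))) (t, y))
        - Dv (ex m) (Dv (ex q) PP) (t, y) := by
    rw [pd_sub ((dS y).const_mul ν) (dC y) m, pd_const_mul (dS y) ν m,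
      pd_sum Finset.univ (fun j _ =>
        dslice _ (contDiff_Dv (contDiff_Dv (hu q) (ex j)) (ex j)) y) m]
    have e5 : ∀ j : Fin d, pd m (fun y => Dv (ex j) (Dv (ex j) (UU u q)) (t, y)) y
        = Dv (ex j) (Dv (ex j) (Dv (ex m) (UU u q))) (t, y) := by
      intro j
      rw [pd_slice (contDiff_Dv (contDiff_Dv (hu q) (ex j)) (ex j)) t y m]
      show Dv (ex m) (Dv (ex j) (Dv (ex j) (UU u q))) (t, y) = _
      rw [Dv_comm (contDiff_Dv (hu q) (ex j)) (ex m) (ex j) (t, y)]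
      have e6 : Dv (ex m) (Dv (ex j) (UU u q)) = Dv (ex j) (Dv (ex m) (UU u q)) :=
        funext (Dv_comm (hu q) (ex m) (ex j))
      rw [e6]
    have e7 : pd m (fun y => Dv (ex q) PP (t, y)) y = Dv (ex m) (Dv (ex q) PP) (t, y) :=
      pd_slice (contDiff_Dv hP (ex q)) t y m
    rw [e7]
    congr 1
    exact congrArg (ν * ·) (Finset.sum_congr rfl (fun j _ => e5 j))
  rw [hL, hR] at hpd
  exact hpd

lemma vorticity_equation (hP : ContDiff ℝ (⊤ : ℕ∞) (fun z : ℝ × (Fin d → ℝ) => P z.1 z.2))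
    (hNS : ∀ t ∈ Set.Icc (0 : ℝ) T, ∀ x, ∀ q : Fin d,
      deriv (fun s => u s x q) t + ∑ j : Fin d, u t x j * pd j (fun y => u t y q) x =
        ν * (∑ j : Fin d, pd j (pd j (fun y => u t y q)) x) - pd q (P t) x)
    {t : ℝ} (ht : t ∈ Set.Icc (0 : ℝ) T) (y : Fin d → ℝ) (k l : Fin d) :
    Dv (et d) (Om u k l) (t, y) + ∑ j : Fin d, u t y j * Dv (ex j) (Om u k l) (t, y)
      = ν * (∑ j : Fin d, Dv (ex j) (Dv (ex j) (Om u k l)) (t, y))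
        - ∑ j : Fin d, (Dv (ex k) (UU u j) (t, y) * Om u j l (t, y)
            + Om u k j (t, y) * Dv (ex l) (UU u j) (t, y)) := by
  have Hkl := NS_Dv_pd hu hP hNS ht y k l
  have Hlk := NS_Dv_pd hu hP hNS ht y l k
  have hOmv : ∀ (v : ℝ × (Fin d → ℝ)) (z : ℝ × (Fin d → ℝ)),
      Dv v (Om u k l) z = Dv v (Dv (ex k) (UU u l)) z - Dv v (Dv (ex l) (UU u k)) z :=
    fun v z => Dv_sub' ((contDiff_Dv (hu l) (ex k)).differentiable (by simp) z)
      ((contDiff_Dv (hu k) (ex l)).differentiable (by simp) z) v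
  have hOm2 : ∀ (j : Fin d) (z : ℝ × (Fin d → ℝ)),
      Dv (ex j) (Dv (ex j) (Om u k l)) z
        = Dv (ex j) (Dv (ex j) (Dv (ex k) (UU u l))) z
          - Dv (ex j) (Dv (ex j) (Dv (ex l) (UU u k))) z := by
    intro j z
    have h1 : Dv (ex j) (Om u k l)
        = fun w => Dv (ex j) (Dv (ex k) (UU u l)) w - Dv (ex j) (Dv (ex l) (UU u k)) w :=
      funext (fun w => hOmv (ex j) w)
    rw [h1]
    exact Dv_sub'
      ((contDiff_Dv (contDiff_Dv (hu l) (ex k)) (ex j)).differentiable (by simp) z)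
      ((contDiff_Dv (contDiff_Dv (hu k) (ex l)) (ex j)).differentiable (by simp) z) (ex j)
  have hpress : Dv (ex l) (Dv (ex k) (fun z : ℝ × (Fin d → ℝ) => P z.1 z.2)) (t, y)
      = Dv (ex k) (Dv (ex l) (fun z : ℝ × (Fin d → ℝ) => P z.1 z.2)) (t, y) :=
    Dv_comm hP (ex l) (ex k) (t, y)
  rw [hpress] at Hlk
  have hs1 : ∑ j : Fin d, u t y j * Dv (ex j) (Om u k l) (t, y)
      = ∑ j : Fin d, u t y j * Dv (ex j) (Dv (ex k) (UU u l)) (t, y)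
        - ∑ j : Fin d, u t y j * Dv (ex j) (Dv (ex l) (UU u k)) (t, y) := by
    rw [← Finset.sum_sub_distrib]
    exact Finset.sum_congr rfl (fun j _ => by rw [hOmv (ex j) (t, y)]; ring)
  have hs2 : ∑ j : Fin d, Dv (ex j) (Dv (ex j) (Om u k l)) (t, y)
      = ∑ j : Fin d, Dv (ex j) (Dv (ex j) (Dv (ex k) (UU u l))) (t, y)
        - ∑ j : Fin d, Dv (ex j) (Dv (ex j) (Dv (ex l) (UU u k))) (t, y) := by
    rw [← Finset.sum_sub_distrib]
    exact Finset.sum_congr rfl (fun j _ => hOm2 j (t, y))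
  have hs3 : ∑ j : Fin d, (Dv (ex k) (UU u j) (t, y) * Om u j l (t, y)
        + Om u k j (t, y) * Dv (ex l) (UU u j) (t, y))
      = ∑ j : Fin d, Dv (ex k) (UU u j) (t, y) * Dv (ex j) (UU u l) (t, y)
        - ∑ j : Fin d, Dv (ex l) (UU u j) (t, y) * Dv (ex j) (UU u k) (t, y) := by
    rw [← Finset.sum_sub_distrib]
    refine Finset.sum_congr rfl (fun j _ => ?_)
    simp only [Om]
    ring
  rw [Finset.sum_add_distrib] at Hkl Hlk
  rw [hOmv (et d) (t, y), hs1, hs2, hs3]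
  linear_combination Hkl - Hlk

end NS

lemma swap3 {M : Type*} [AddCommMonoid M] (f : Fin d → Fin d → Fin d → M) :
    ∑ k : Fin d, ∑ l : Fin d, ∑ j : Fin d, f k l j
      = ∑ j : Fin d, ∑ l : Fin d, ∑ k : Fin d, f k l j := by
  calc ∑ k : Fin d, ∑ l : Fin d, ∑ j : Fin d, f k l j
      = ∑ k : Fin d, ∑ j : Fin d, ∑ l : Fin d, f k l j :=
        Finset.sum_congr rfl (fun k _ => Finset.sum_comm)
    _ = ∑ j : Fin d, ∑ k : Fin d, ∑ l : Fin d, f k l j := Finset.sum_comm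
    _ = ∑ j : Fin d, ∑ l : Fin d, ∑ k : Fin d, f k l j :=
        Finset.sum_congr rfl (fun j _ => Finset.sum_comm)

lemma cancel1 (c O : Fin d → Fin d → ℝ) (a b : Fin d → ℝ) :
    ∑ k : Fin d, ∑ l : Fin d, ((∑ j : Fin d, c k j * O j l) * a k * b l)
      = ∑ k : Fin d, ∑ l : Fin d, (O k l * (∑ m : Fin d, a m * c m k) * b l) := by
  have h1 : ∑ k : Fin d, ∑ l : Fin d, ((∑ j : Fin d, c k j * O j l) * a k * b l)
      = ∑ k : Fin d, ∑ l : Fin d, ∑ j : Fin d, (c k j * O j l * a k * b l) := by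
    refine Finset.sum_congr rfl fun k _ => Finset.sum_congr rfl fun l _ => ?_
    rw [Finset.sum_mul, Finset.sum_mul]
  have h2 : ∑ k : Fin d, ∑ l : Fin d, (O k l * (∑ m : Fin d, a m * c m k) * b l)
      = ∑ k : Fin d, ∑ l : Fin d, ∑ m : Fin d, (O k l * (a m * c m k) * b l) := by
    refine Finset.sum_congr rfl fun k _ => Finset.sum_congr rfl fun l _ => ?_
    rw [Finset.mul_sum, Finset.sum_mul]
  rw [h1, h2, swap3]
  refine Finset.sum_congr rfl fun k _ => Finset.sum_congr rfl fun l _ =>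
    Finset.sum_congr rfl fun m _ => ?_
  ring

lemma cancel2 (c O : Fin d → Fin d → ℝ) (a b : Fin d → ℝ) :
    ∑ k : Fin d, ∑ l : Fin d, ((∑ j : Fin d, O k j * c l j) * a k * b l)
      = ∑ k : Fin d, ∑ l : Fin d, (O k l * a k * (∑ m : Fin d, b m * c m l)) := by
  have h1 : ∑ k : Fin d, ∑ l : Fin d, ((∑ j : Fin d, O k j * c l j) * a k * b l)
      = ∑ k : Fin d, ∑ l : Fin d, ∑ j : Fin d, (O k j * c l j * a k * b l) := by
    refine Finset.sum_congr rfl fun k _ => Finset.sum_congr rfl fun l _ => ?_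
    rw [Finset.sum_mul, Finset.sum_mul]
  have h2 : ∑ k : Fin d, ∑ l : Fin d, (O k l * a k * (∑ m : Fin d, b m * c m l))
      = ∑ k : Fin d, ∑ l : Fin d, ∑ m : Fin d, (O k l * a k * (b m * c m l)) := by
    refine Finset.sum_congr rfl fun k _ => Finset.sum_congr rfl fun l _ => ?_
    rw [Finset.mul_sum]
  rw [h1, h2]
  refine Finset.sum_congr rfl fun k _ => ?_
  rw [Finset.sum_comm]
  refine Finset.sum_congr rfl fun l _ => Finset.sum_congr rfl fun m _ => ?_
  ring

theorem stmt10 (d : ℕ) (hd : 2 ≤ d) (ν T : ℝ) (hν : 0 < ν) (hT : 0 < T)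
    (u : ℝ → (Fin d → ℝ) → Fin d → ℝ) (P : ℝ → (Fin d → ℝ) → ℝ)
    (φ : ℝ → (Fin d → ℝ) → Fin d → ℝ)
    (hu : ∀ q : Fin d, ContDiff ℝ (⊤ : ℕ∞) (fun z : ℝ × (Fin d → ℝ) => u z.1 z.2 q))
    (hP : ContDiff ℝ (⊤ : ℕ∞) (fun z : ℝ × (Fin d → ℝ) => P z.1 z.2))
    (hφ : ∀ k : Fin d, ContDiff ℝ (⊤ : ℕ∞) (fun z : ℝ × (Fin d → ℝ) => φ z.1 z.2 k))
    (hdiv : ∀ t ∈ Set.Icc (0 : ℝ) T, ∀ x, ∑ j : Fin d, pd j (fun y => u t y j) x = 0)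
    (hNS : ∀ t ∈ Set.Icc (0 : ℝ) T, ∀ x, ∀ q : Fin d,
      deriv (fun s => u s x q) t + ∑ j : Fin d, u t x j * pd j (fun y => u t y q) x =
        ν * (∑ j : Fin d, pd j (pd j (fun y => u t y q)) x) - pd q (P t) x)
    (hflow : ∀ t ∈ Set.Icc (0 : ℝ) T, ∀ x, ∀ k : Fin d,
      deriv (fun s => φ s x k) t = u t (φ t x) k)
    (hinit : ∀ x, φ 0 x = x) :
    ∀ α β : Fin d, ∀ t ∈ Set.Icc (0 : ℝ) T, ∀ x,
      (∑ k : Fin d, ∑ l : Fin d,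
          vort u k l t (φ t x) * pd α (fun y => φ t y k) x * pd β (fun y => φ t y l) x)
        - vort u α β 0 x =
      ν * ∫ s in (0 : ℝ)..t, ∑ k : Fin d, ∑ l : Fin d,
          (∑ j : Fin d, pd j (pd j (vort u k l s)) (φ s x))
            * pd α (fun y => φ s y k) x * pd β (fun y => φ s y l) x := by
  intro α β t ht x
  have hu' : ∀ q : Fin d, ContDiff ℝ (⊤ : ℕ∞) (UU u q) := hu
  set PH : Fin d → (ℝ × (Fin d → ℝ)) → ℝ := fun k z => φ z.1 z.2 k with hPH
  have hφ' : ∀ k : Fin d, ContDiff ℝ (⊤ : ℕ∞) (PH k) := hφ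
  -- abbreviations
  set A : ℝ → ℝ := fun r => ∑ k : Fin d, ∑ l : Fin d,
    Om u k l (r, φ r x) * Dv (ex α) (PH k) (r, x) * Dv (ex β) (PH l) (r, x) with hA
  set G : ℝ → ℝ := fun r => ∑ k : Fin d, ∑ l : Fin d,
    (∑ j : Fin d, Dv (ex j) (Dv (ex j) (Om u k l)) (r, φ r x))
      * Dv (ex α) (PH k) (r, x) * Dv (ex β) (PH l) (r, x) with hG
  -- derivative of A on [0,T]
  have key : ∀ s ∈ Set.Icc (0 : ℝ) T, HasDerivAt A (ν * G s) s := by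
    intro s hs
    -- the flow curve has derivative u s (φ s x)
    have hc : HasDerivAt (fun r => φ r x) (fun k => u s (φ s x) k) s := by
      rw [hasDerivAt_pi]
      intro k
      have h1 := hasDerivAt_sliceT (hφ' k) s x
      have h2 : Dv (et d) (PH k) (s, x) = u s (φ s x) k := by
        have h3 : deriv (fun r => φ r x k) s = Dv (et d) (PH k) (s, x) := h1.deriv
        rw [← h3]
        exact hflow s hs x k
      rw [← h2]
      exact h1
    -- derivative of the vorticity factor
    have hW : ∀ k l : Fin d, HasDerivAt (fun r => Om u k l (r, φ r x))
        (Dv (et d) (Om u k l) (s, φ s x)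
          + ∑ j : Fin d, u s (φ s x) j * Dv (ex j) (Om u k l) (s, φ s x)) s :=
      fun k l => hasDerivAt_comp_curve (contDiff_Om hu' k l) hc
    -- derivative of the Jacobian factors
    have ha : ∀ (γ k : Fin d), HasDerivAt (fun r => Dv (ex γ) (PH k) (r, x))
        (∑ m : Fin d, Dv (ex γ) (PH m) (s, x) * Dv (ex m) (UU u k) (s, φ s x)) s := by
      intro γ k
      have h1 := hasDerivAt_sliceT (contDiff_Dv (hφ' k) (ex γ)) s x
      have h2 : Dv (et d) (Dv (ex γ) (PH k)) (s, x)
          = ∑ m : Fin d, Dv (ex γ) (PH m) (s, x) * Dv (ex m) (UU u k) (s, φ s x) := by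
        rw [Dv_comm (hφ' k) (et d) (ex γ) (s, x)]
        show Dv (0, Pi.single γ 1) (Dv (et d) (PH k)) (s, x) = _
        rw [← pd_slice (contDiff_Dv (hφ' k) (et d)) s x γ]
        have h3 : (fun y => Dv (et d) (PH k) (s, y)) = fun y => u s (φ s y) k := by
          funext y
          have h4 : deriv (fun r => φ r y k) s = Dv (et d) (PH k) (s, y) :=
            (hasDerivAt_sliceT (hφ' k) s y).deriv
          rw [← h4]
          exact hflow s hs y k
        rw [h3]
        have h5 := pd_comp (hu' k) (g := fun y => φ s y)
          (fun m w => (differentiable_sliceX (hφ' m) s) w) s x γ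
        refine h5.trans (Finset.sum_congr rfl fun m _ => ?_)
        have h6 : pd γ (fun y => φ s y m) x = Dv (ex γ) (PH m) (s, x) :=
          pd_slice (hφ' m) s x γ
        rw [h6]
        rfl
      rw [← h2]
      exact h1
    -- assemble the derivative of A
    have hAd : HasDerivAt A (∑ k : Fin d, ∑ l : Fin d,
        (((Dv (et d) (Om u k l) (s, φ s x)
            + ∑ j : Fin d, u s (φ s x) j * Dv (ex j) (Om u k l) (s, φ s x))
              * Dv (ex α) (PH k) (s, x)
          + Om u k l (s, φ s x)
              * (∑ m : Fin d, Dv (ex α) (PH m) (s, x) * Dv (ex m) (UU u k) (s, φ s x)))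
            * Dv (ex β) (PH l) (s, x)
         + Om u k l (s, φ s x) * Dv (ex α) (PH k) (s, x)
            * (∑ m : Fin d, Dv (ex β) (PH m) (s, x) * Dv (ex m) (UU u l) (s, φ s x)))) s := by
      rw [hA]
      exact HasDerivAt.fun_sum (fun k _ => HasDerivAt.fun_sum (fun l _ =>
        (((hW k l).fun_mul (ha α k)).fun_mul (ha β l))))
    -- identify the derivative with ν * G s
    have hval : (∑ k : Fin d, ∑ l : Fin d,
        (((Dv (et d) (Om u k l) (s, φ s x)
            + ∑ j : Fin d, u s (φ s x) j * Dv (ex j) (Om u k l) (s, φ s x))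
              * Dv (ex α) (PH k) (s, x)
          + Om u k l (s, φ s x)
              * (∑ m : Fin d, Dv (ex α) (PH m) (s, x) * Dv (ex m) (UU u k) (s, φ s x)))
            * Dv (ex β) (PH l) (s, x)
         + Om u k l (s, φ s x) * Dv (ex α) (PH k) (s, x)
            * (∑ m : Fin d, Dv (ex β) (PH m) (s, x) * Dv (ex m) (UU u l) (s, φ s x))))
        = ν * G s := by
      -- notation
      set p := φ s x with hp
      set c : Fin d → Fin d → ℝ := fun m k => Dv (ex m) (UU u k) (s, p) with hcdef
      set O : Fin d → Fin d → ℝ := fun k l => Om u k l (s, p) with hOdef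
      set L : Fin d → Fin d → ℝ :=
        fun k l => ∑ j : Fin d, Dv (ex j) (Dv (ex j) (Om u k l)) (s, p) with hLdef
      set a : Fin d → ℝ := fun k => Dv (ex α) (PH k) (s, x) with hadef
      set b : Fin d → ℝ := fun l => Dv (ex β) (PH l) (s, x) with hbdef
      have hVE : ∀ k l : Fin d,
          Dv (et d) (Om u k l) (s, p) + ∑ j : Fin d, u s p j * Dv (ex j) (Om u k l) (s, p)
          = ν * L k l - ∑ j : Fin d, (c k j * O j l + O k j * c l j) := by
        intro k l
        have h := vorticity_equation hu' hP hNS hs p k l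
        exact h
      have step1 : ∀ k l : Fin d,
          (((Dv (et d) (Om u k l) (s, p)
              + ∑ j : Fin d, u s p j * Dv (ex j) (Om u k l) (s, p)) * a k
            + O k l * (∑ m : Fin d, a m * c m k)) * b l
           + O k l * a k * (∑ m : Fin d, b m * c m l))
          = ν * (L k l * a k * b l)
            - (∑ j : Fin d, c k j * O j l) * a k * b l
            - (∑ j : Fin d, O k j * c l j) * a k * b l
            + O k l * (∑ m : Fin d, a m * c m k) * b l
            + O k l * a k * (∑ m : Fin d, b m * c m l) := by
        intro k l
        rw [hVE k l]
        have hsplit : ∑ j : Fin d, (c k j * O j l + O k j * c l j)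
            = (∑ j : Fin d, c k j * O j l) + (∑ j : Fin d, O k j * c l j) :=
          Finset.sum_add_distrib
        rw [hsplit]
        ring
      calc (∑ k : Fin d, ∑ l : Fin d,
          (((Dv (et d) (Om u k l) (s, p)
              + ∑ j : Fin d, u s p j * Dv (ex j) (Om u k l) (s, p)) * a k
            + O k l * (∑ m : Fin d, a m * c m k)) * b l
           + O k l * a k * (∑ m : Fin d, b m * c m l)))
          = ∑ k : Fin d, ∑ l : Fin d,
            (ν * (L k l * a k * b l)
              - (∑ j : Fin d, c k j * O j l) * a k * b l
              - (∑ j : Fin d, O k j * c l j) * a k * b l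
              + O k l * (∑ m : Fin d, a m * c m k) * b l
              + O k l * a k * (∑ m : Fin d, b m * c m l)) :=
            Finset.sum_congr rfl (fun k _ => Finset.sum_congr rfl (fun l _ => step1 k l))
        _ = (∑ k : Fin d, ∑ l : Fin d, ν * (L k l * a k * b l))
              - (∑ k : Fin d, ∑ l : Fin d, (∑ j : Fin d, c k j * O j l) * a k * b l)
              - (∑ k : Fin d, ∑ l : Fin d, (∑ j : Fin d, O k j * c l j) * a k * b l)
              + (∑ k : Fin d, ∑ l : Fin d, O k l * (∑ m : Fin d, a m * c m k) * b l)
              + (∑ k : Fin d, ∑ l : Fin d, O k l * a k * (∑ m : Fin d, b m * c m l)) := by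
            simp only [Finset.sum_add_distrib, Finset.sum_sub_distrib]
        _ = ν * G s := by
            rw [cancel1 c O a b, cancel2 c O a b]
            rw [show G s = ∑ k : Fin d, ∑ l : Fin d, L k l * a k * b l from rfl]
            rw [Finset.mul_sum]
            simp only [Finset.mul_sum]
            ring
    rw [← hval]
    exact hAd
  -- continuity and integrability
  have hpcont : Continuous (fun r : ℝ => ((r, φ r x) : ℝ × (Fin d → ℝ))) :=
    continuous_id.prodMk (continuous_pi fun k =>
      (hφ' k).continuous.comp (continuous_id.prodMk continuous_const))
  have hxcont : Continuous (fun r : ℝ => ((r, x) : ℝ × (Fin d → ℝ))) :=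
    continuous_id.prodMk continuous_const
  have hGcont : Continuous G := by
    rw [hG]
    refine continuous_finset_sum _ fun k _ => continuous_finset_sum _ fun l _ => ?_
    exact ((continuous_finset_sum _ fun j _ =>
        (contDiff_Dv (contDiff_Dv (contDiff_Om hu' k l) (ex j)) (ex j)).continuous.comp
          hpcont).mul
      ((contDiff_Dv (hφ' k) (ex α)).continuous.comp hxcont)).mul
      ((contDiff_Dv (hφ' l) (ex β)).continuous.comp hxcont)
  have hsub : Set.uIcc (0 : ℝ) t ⊆ Set.Icc (0 : ℝ) T := by
    rw [Set.uIcc_of_le ht.1]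
    exact Set.Icc_subset_Icc le_rfl ht.2
  have hFTC : ∫ s in (0 : ℝ)..t, ν * G s = A t - A 0 :=
    intervalIntegral.integral_eq_sub_of_hasDerivAt (fun s hs => key s (hsub hs))
      ((continuous_const.mul hGcont).intervalIntegrable 0 t)
  -- identify endpoints
  have hAt : (∑ k : Fin d, ∑ l : Fin d,
      vort u k l t (φ t x) * pd α (fun y => φ t y k) x * pd β (fun y => φ t y l) x) = A t := by
    rw [hA]
    refine Finset.sum_congr rfl fun k _ => Finset.sum_congr rfl fun l _ => ?_
    have h1 : vort u k l t (φ t x) = Om u k l (t, φ t x) := vort_eq hu' k l t (φ t x)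
    have h2 : pd α (fun y => φ t y k) x = Dv (ex α) (PH k) (t, x) := pd_slice (hφ' k) t x α
    have h3 : pd β (fun y => φ t y l) x = Dv (ex β) (PH l) (t, x) := pd_slice (hφ' l) t x β
    rw [h1, h2, h3]
  have hδ : ∀ γ k : Fin d, Dv (ex γ) (PH k) ((0 : ℝ), x) = (Pi.single γ (1 : ℝ) : Fin d → ℝ) k := by
    intro γ k
    show Dv (0, Pi.single γ 1) (PH k) ((0 : ℝ), x) = _
    rw [← pd_slice (hφ' k) 0 x γ]
    have h1 : (fun y => PH k ((0 : ℝ), y)) = fun y : Fin d → ℝ => y k := by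
      funext y
      show φ 0 y k = y k
      rw [hinit y]
    rw [h1]
    simp only [pd]
    have h2 : HasFDerivAt (fun y : Fin d → ℝ => y k)
        (ContinuousLinearMap.proj k : (Fin d → ℝ) →L[ℝ] ℝ) x :=
      (ContinuousLinearMap.proj (R := ℝ) (φ := fun _ : Fin d => ℝ) k).hasFDerivAt
    rw [h2.fderiv]
    rfl
  have hA0 : vort u α β 0 x = A 0 := by
    rw [hA]
    simp only [hδ, hinit x]
    rw [vort_eq hu' α β 0 x]
    simp [Pi.single_apply]
  -- identify the integrand
  have hInteq : Set.EqOn (fun s => ∑ k : Fin d, ∑ l : Fin d,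
      (∑ j : Fin d, pd j (pd j (vort u k l s)) (φ s x))
        * pd α (fun y => φ s y k) x * pd β (fun y => φ s y l) x) G (Set.uIcc (0 : ℝ) t) := by
    intro s _
    rw [hG]
    refine Finset.sum_congr rfl fun k _ => Finset.sum_congr rfl fun l _ => ?_
    have h1 : (∑ j : Fin d, pd j (pd j (vort u k l s)) (φ s x))
        = ∑ j : Fin d, Dv (ex j) (Dv (ex j) (Om u k l)) (s, φ s x) :=
      Finset.sum_congr rfl fun j _ => lap_vort_eq hu' k l j s (φ s x)
    have h2 : pd α (fun y => φ s y k) x = Dv (ex α) (PH k) (s, x) := pd_slice (hφ' k) s x α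
    have h3 : pd β (fun y => φ s y l) x = Dv (ex β) (PH l) (s, x) := pd_slice (hφ' l) s x β
    rw [h1, h2, h3]
  rw [hAt, hA0, intervalIntegral.integral_congr hInteq, ← intervalIntegral.integral_const_mul,
    hFTC]
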